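/- arXiv:math/0312296 — 7 statements merged into one kernel-verified Lean document; each statement's English description precedes it below -/
import Mathlib

section
/- Let f(y) = e^{-2y}(1 + 2y^2 + 2y√(1+y^2)) for y ≥ 0. Then f(0) = 1 and f'(y) < 0 for all y > 0; consequently f(y) ≤ 1 for all y ≥ 0. -/
/-!
Since `(y + √(1 + y²))² = 1 + 2y² + 2y√(1 + y²)` and `y + √(1 + y²) = exp (arsinh y)`, the function is
`f y = exp (2 (arsinh y - y))`. As `arsinh' y = 1 / √(1 + y²) < 1` for `y ≠ 0`, the exponent is strictly
decreasing, and `arsinh y ≤ y` for `y ≥ 0` because `y ≤ sinh y` there.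
-/

open Real

lemma exp_two_mul_arsinh_sub_self (y : ℝ) :
    exp (2 * (arsinh y - y)) = exp (-2 * y) * (1 + 2 * y ^ 2 + 2 * y * √(1 + y ^ 2)) := by
  have hs : √(1 + y ^ 2) ^ 2 = 1 + y ^ 2 := sq_sqrt (by positivity)
  calc exp (2 * (arsinh y - y)) = exp (-2 * y) * exp (arsinh y) ^ 2 := by
        rw [← exp_nat_mul, ← exp_add]; push_cast; ring_nf
    _ = exp (-2 * y) * (1 + 2 * y ^ 2 + 2 * y * √(1 + y ^ 2)) := by
        rw [exp_arsinh]; linear_combination exp (-2 * y) * hs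

lemma hasDerivAt_exp_two_mul_arsinh_sub_self (y : ℝ) :
    HasDerivAt (fun y => exp (2 * (arsinh y - y)))
      (exp (2 * (arsinh y - y)) * (2 * ((√(1 + y ^ 2))⁻¹ - 1))) y :=
  (((hasDerivAt_arsinh y).sub (hasDerivAt_id y)).const_mul 2).exp

lemma inv_sqrt_one_add_sq_lt_one {y : ℝ} (hy : y ≠ 0) : (√(1 + y ^ 2))⁻¹ < 1 :=
  inv_lt_one_of_one_lt₀ <| (lt_sqrt zero_le_one).2 (by simpa using sq_pos_of_ne_zero hy)

lemma deriv_exp_two_mul_arsinh_sub_self_neg {y : ℝ} (hy : y ≠ 0) :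
    deriv (fun y => exp (2 * (arsinh y - y))) y < 0 := by
  rw [(hasDerivAt_exp_two_mul_arsinh_sub_self y).deriv]
  exact mul_neg_of_pos_of_neg (exp_pos _) (by linarith [inv_sqrt_one_add_sq_lt_one hy])

lemma arsinh_le_self {y : ℝ} (hy : 0 ≤ y) : arsinh y ≤ y := by
  simpa only [arsinh_sinh] using arsinh_le_arsinh.2 (self_le_sinh_iff.2 hy)

/-- f(y) = e^{-2y}(1 + 2y² + 2y√(1+y²)) satisfies f(0) = 1,
f'(y) < 0 for y > 0, and consequently f(y) ≤ 1 for y ≥ 0. -/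
theorem stmt0 (f : ℝ → ℝ)
    (hf : ∀ y : ℝ, f y = Real.exp (-2 * y) * (1 + 2 * y ^ 2 + 2 * y * Real.sqrt (1 + y ^ 2))) :
    f 0 = 1 ∧ (∀ y : ℝ, 0 < y → deriv f y < 0) ∧ ∀ y : ℝ, 0 ≤ y → f y ≤ 1 := by
  obtain rfl : f = fun y => exp (2 * (arsinh y - y)) :=
    funext fun y => (hf y).trans (exp_two_mul_arsinh_sub_self y).symm
  refine ⟨by simp, fun y hy => deriv_exp_two_mul_arsinh_sub_self_neg hy.ne', fun y hy => ?_⟩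
  exact exp_le_one_iff.2 (by linarith [arsinh_le_self hy])
end

section
/- Let H = [[0, ω],[−ω, −2γ]] with ω > 0, γ ≥ 0. Then the operator norm (with respect to the Euclidean norm) of exp(tH) satisfies ‖exp(tH)‖ ≤ 1 for all t ≥ 0. -/
/-!
Lorentz-oscillator matrices are dissipative: `⟪H y, y⟫ = -2γ y₁² ≤ 0`. For a dissipative `A`, the
derivative of `‖exp (s • A) x‖²` is `2 ⟪A (exp (s • A) x), exp (s • A) x⟫ ≤ 0`, so the norm of the
trajectory never grows and `exp (t • A)` is a contraction for `t ≥ 0`.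
-/

open Matrix NormedSpace

open scoped RealInnerProductSpace

theorem Matrix.toEuclideanCLM_exp {n : Type*} [Fintype n] [DecidableEq n] (M : Matrix n n ℝ) :
    toEuclideanCLM (𝕜 := ℝ) (exp M) = exp (toEuclideanCLM (𝕜 := ℝ) M) := by
  -- Any matrix norm inducing the product topology makes the exponential series converge.
  let := Matrix.linftyOpNormedRing (n := n) (α := ℝ)
  let := Matrix.linftyOpNormedAlgebra (n := n) (R := ℝ) (α := ℝ)
  exact map_exp_of_mem_ball (𝕂 := ℝ) (toEuclideanCLM (𝕜 := ℝ) (n := n))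
    (LinearMap.continuous_of_finiteDimensional
      (toEuclideanCLM (𝕜 := ℝ) (n := n)).toAlgEquiv.toLinearMap) M
    ((expSeries_radius_eq_top ℝ (Matrix n n ℝ)).symm ▸ edist_lt_top _ _)

section Dissipative

variable {E : Type*} [NormedAddCommGroup E] [InnerProductSpace ℝ E] [CompleteSpace E]

theorem hasDerivAt_norm_sq_exp_smul_apply (A : E →L[ℝ] E) (x : E) (s : ℝ) :
    HasDerivAt (fun u : ℝ => ‖exp (u • A) x‖ ^ 2)
      (2 * ⟪A (exp (s • A) x), exp (s • A) x⟫) s := by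
  have hflow : HasDerivAt (fun u : ℝ => exp (u • A) x) (A (exp (s • A) x)) s := by
    simpa using (hasDerivAt_exp_smul_const' A s).clm_apply (hasDerivAt_const s x)
  simpa only [real_inner_comm] using hflow.norm_sq

theorem norm_exp_smul_apply_le_of_inner_map_self_nonpos {A : E →L[ℝ] E}
    (hA : ∀ y, ⟪A y, y⟫ ≤ 0) (x : E) {t : ℝ} (ht : 0 ≤ t) : ‖exp (t • A) x‖ ≤ ‖x‖ := by
  have hanti : Antitone fun u : ℝ => ‖exp (u • A) x‖ ^ 2 :=
    antitone_of_hasDerivAt_nonpos (hasDerivAt_norm_sq_exp_smul_apply A x)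
      fun s => mul_nonpos_of_nonneg_of_nonpos zero_le_two (hA _)
  have hsq := hanti ht
  simp only [zero_smul, exp_zero, one_apply_eq_self] at hsq
  exact (pow_le_pow_iff_left₀ (norm_nonneg _) (norm_nonneg _) two_ne_zero).mp hsq

theorem norm_exp_smul_le_one_of_inner_map_self_nonpos {A : E →L[ℝ] E}
    (hA : ∀ y, ⟪A y, y⟫ ≤ 0) {t : ℝ} (ht : 0 ≤ t) : ‖exp (t • A)‖ ≤ 1 :=
  ContinuousLinearMap.opNorm_le_bound _ zero_le_one fun x => by
    simpa using norm_exp_smul_apply_le_of_inner_map_self_nonpos hA x ht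

end Dissipative

theorem inner_toEuclideanCLM_lorentz_self (γ ω : ℝ) (y : EuclideanSpace ℝ (Fin 2)) :
    ⟪toEuclideanCLM (𝕜 := ℝ) !![0, ω; -ω, -2 * γ] y, y⟫ = -2 * γ * y 1 ^ 2 := by
  simp only [PiLp.inner_apply, ofLp_toEuclideanCLM, mulVec, dotProduct, of_apply, cons_val',
    cons_val_fin_one, Fin.sum_univ_two, Fin.isValue, cons_val_zero, cons_val_one,
    RCLike.inner_apply, Real.ringHom_apply]
  ring

theorem stmt2_general (γ ω : ℝ) (hγ : 0 ≤ γ)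
    (H : Matrix (Fin 2) (Fin 2) ℝ) (hH : H = !![0, ω; -ω, -2 * γ]) :
    ∀ t : ℝ, 0 ≤ t →
      ‖Matrix.toEuclideanCLM (𝕜 := ℝ) (NormedSpace.exp (t • H))‖ ≤ 1 := by
  intro t ht
  have hdiss : ∀ y, ⟪toEuclideanCLM (𝕜 := ℝ) H y, y⟫ ≤ 0 := fun y => by
    rw [hH, inner_toEuclideanCLM_lorentz_self]
    nlinarith [sq_nonneg (y 1)]
  rw [toEuclideanCLM_exp, map_smul]
  exact norm_exp_smul_le_one_of_inner_map_self_nonpos hdiss ht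

/-- For H = [[0, ω],[−ω, −2γ]] with ω > 0, γ ≥ 0, the Euclidean operator norm
of exp(tH) is at most 1 for all t ≥ 0. -/
theorem stmt2 (γ ω : ℝ) (hω : 0 < ω) (hγ : 0 ≤ γ)
    (H : Matrix (Fin 2) (Fin 2) ℝ) (hH : H = !![0, ω; -ω, -2 * γ]) :
    ∀ t : ℝ, 0 ≤ t →
      ‖Matrix.toEuclideanCLM (𝕜 := ℝ) (NormedSpace.exp (t • H))‖ ≤ 1 :=
  stmt2_general γ ω hγ H hH
end

section
/- Let V be a skew-Hermitian n×n complex matrix whose spectrum consists of 0 (with multiplicity n−2) and ±iω_p for some ω_p > 0. Then exp(tV) = I + (sin(ω_p t)/ω_p) V + 2 (sin(ω_p t / 2)/ω_p)² V² for all t ∈ ℝ. -/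
/-!
A skew-Hermitian matrix is normal, so by the continuous functional calculus `exp (t • V)` only
depends on the values of `z ↦ exp (t z)` on the spectrum of `V`. The spectrum consists of roots of
the characteristic polynomial, i.e. of `0` and `± i ω_p`, and on these three points the exponential
agrees with the quadratic polynomial `1 + (sin (ω_p t) / ω_p) z + 2 (sin (ω_p t / 2) / ω_p)² z²`
(at `± i ω_p` this is Euler's formula together with `cos x = 1 - 2 sin² (x / 2)`).
-/

open Matrix Polynomial

theorem Complex.exp_ofReal_mul_eq_of_mul_sq_add_sq_eq_zero (ω t : ℝ) {μ : ℂ}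
    (hμ : μ * (μ ^ 2 + ω ^ 2) = 0) :
    Complex.exp (t * μ) =
      1 + (Real.sin (ω * t) / ω) • μ + (2 * (Real.sin (ω * t / 2) / ω) ^ 2) • μ ^ 2 := by
  rcases eq_or_ne μ 0 with rfl | hμ0
  · simp
  have hsq : μ ^ 2 = -ω ^ 2 := eq_neg_of_add_eq_zero_left ((mul_eq_zero.mp hμ).resolve_left hμ0)
  have hω : (ω : ℂ) ≠ 0 := by
    rintro hω
    simp [hω, hμ0] at hsq
  have hcos : Real.cos (ω * t) = 1 - 2 * Real.sin (ω * t / 2) ^ 2 := by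
    rw [Real.sin_sq_eq_half_sub, mul_div_cancel₀ _ two_ne_zero]
    ring
  have hμ_cases : μ = ω * I ∨ μ = -(ω * I) :=
    sq_eq_sq_iff_eq_or_eq_neg.mp (by rw [hsq]; ring_nf; simp [I_sq])
  rcases hμ_cases with rfl | rfl
  · rw [show (t : ℂ) * (ω * I) = ((ω * t : ℝ) : ℂ) * I by push_cast; ring, exp_mul_I,
      ← ofReal_cos, ← ofReal_sin, hcos, hsq]
    simp only [real_smul]
    push_cast
    field_simp
    ring
  · rw [show (t : ℂ) * -(ω * I) = ((-(ω * t) : ℝ) : ℂ) * I by push_cast; ring, exp_mul_I,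
      ← ofReal_cos, ← ofReal_sin, Real.cos_neg, Real.sin_neg, hcos, hsq]
    simp only [real_smul]
    push_cast
    field_simp
    ring

section
-- The C⋆-norm is only needed to run the functional calculus: `NormedSpace.exp` depends on the
-- topology alone, so the lemma does not mention the norm.
open scoped Matrix.Norms.L2Operator

theorem Matrix.exp_smul_eq_aeval_of_eqOn_spectrum {n : Type*} [Fintype n] [DecidableEq n]
    {A : Matrix n n ℂ} (hA : IsStarNormal A) (t : ℂ) (p : ℂ[X])
    (h : ∀ μ ∈ spectrum ℂ A, Complex.exp (t * μ) = p.eval μ) :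
    NormedSpace.exp (t • A) = aeval A p := by
  rw [← CFC.complex_exp_eq_normedSpace_exp, ← cfc_comp_smul t Complex.exp A,
    ← cfc_polynomial p A]
  exact cfc_congr h

end

theorem Matrix.exp_smul_eq_quadratic_of_eqOn_spectrum {n : Type*} [Fintype n] [DecidableEq n]
    {A : Matrix n n ℂ} (hA : IsStarNormal A) (t b c : ℝ)
    (h : ∀ μ ∈ spectrum ℂ A, Complex.exp (t * μ) = 1 + b • μ + c • μ ^ 2) :
    NormedSpace.exp (t • A) = 1 + b • A + c • A ^ 2 := by
  rw [← Complex.coe_smul t A, exp_smul_eq_aeval_of_eqOn_spectrum hA t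
    (1 + C (b : ℂ) * X + C (c : ℂ) * X ^ 2) (by simpa [Complex.real_smul] using h)]
  simp [← Algebra.smul_def, Complex.coe_smul]

theorem stmt4_general {n : ℕ} (ωp : ℝ)
    (V : Matrix (Fin n) (Fin n) ℂ) (hskew : Vᴴ = -V)
    (hchar : V.charpoly = X ^ (n - 2) * (X ^ 2 + C ((ωp : ℂ) ^ 2))) :
    ∀ t : ℝ,
      NormedSpace.exp (t • V) =
        1 + (Real.sin (ωp * t) / ωp) • V +
          (2 * (Real.sin (ωp * t / 2) / ωp) ^ 2) • (V ^ 2) := by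
  intro t
  have hnormal : IsStarNormal V := skewAdjoint.isStarNormal_of_mem hskew
  refine exp_smul_eq_quadratic_of_eqOn_spectrum hnormal t _ _ fun μ hμ => ?_
  refine Complex.exp_ofReal_mul_eq_of_mul_sq_add_sq_eq_zero ωp t ?_
  have hroot := (mem_spectrum_iff_isRoot_charpoly.mp hμ).eq_zero
  simp only [hchar, eval_mul, eval_pow, eval_X, eval_add, eval_C, mul_eq_zero] at hroot ⊢
  exact hroot.imp_left (pow_eq_zero_iff'.mp · |>.1)

/-- If V is skew-Hermitian with characteristic polynomial λ^{n−2}(λ² + ω_p²)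
(spectrum {0, ±iω_p}), then exp(tV) = I + (sin(ω_p t)/ω_p)V + 2(sin(ω_p t/2)/ω_p)² V². -/
theorem stmt4 {n : ℕ} (hn : 2 ≤ n) (ωp : ℝ) (hωp : 0 < ωp)
    (V : Matrix (Fin n) (Fin n) ℂ) (hskew : Vᴴ = -V)
    (hchar : V.charpoly = X ^ (n - 2) * (X ^ 2 + C ((ωp : ℂ) ^ 2))) :
    ∀ t : ℝ,
      NormedSpace.exp (t • V) =
        1 + (Real.sin (ωp * t) / ωp) • V +
          (2 * (Real.sin (ωp * t / 2) / ωp) ^ 2) • (V ^ 2) :=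
  stmt4_general ωp V hskew hchar
end

section
/- Let U and G be matrices with ‖Uⁿ‖ ≤ C for all n ≥ 0, and U − G = Δt³ W with ‖W‖ ≤ W_m, where Δt > 0. Then for all n with nΔt ≤ T: ‖Gⁿ‖ ≤ C + C(e^{W_m C T Δt²} − 1) and ‖Uⁿ − Gⁿ‖ ≤ C(e^{W_m C T Δt²} − 1). -/
lemma pow_sub_pow_telescope {R : Type*} [Ring R] (U G : R) :
    ∀ n : ℕ, U ^ n - G ^ n = ∑ k ∈ Finset.range n, U ^ (n - 1 - k) * (U - G) * G ^ k := by
  intro n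
  induction n with
  | zero => simp
  | succ n ih =>
    rw [Finset.sum_range_succ]
    have h1 : ∀ k ∈ Finset.range n, U ^ (n + 1 - 1 - k) * (U - G) * G ^ k
        = U * (U ^ (n - 1 - k) * (U - G) * G ^ k) := by
      intro k hk
      rw [Finset.mem_range] at hk
      have : n + 1 - 1 - k = (n - 1 - k) + 1 := by omega
      rw [this, pow_succ']
      noncomm_ring
    rw [Finset.sum_congr rfl h1, ← Finset.mul_sum, ← ih]
    have : n + 1 - 1 - n = 0 := by omega
    rw [this, pow_zero, one_mul, pow_succ', pow_succ']
    noncomm_ring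

/-- Theorem 7.4: If ‖Uⁿ‖ ≤ C for all n and U − G = Δt³ W with ‖W‖ ≤ W_m,
then for nΔt ≤ T: ‖Gⁿ‖ ≤ C + C(e^{W_m C T Δt²} − 1) and ‖Uⁿ − Gⁿ‖ ≤ C(e^{W_m C T Δt²} − 1). -/
theorem stmt9 {R : Type*} [NormedRing R] [NormedAlgebra ℝ R]
    (U G W : R) (C Wm Δt T : ℝ)
    (hU : ∀ n : ℕ, ‖U ^ n‖ ≤ C)
    (hUG : U - G = (Δt ^ 3) • W) (hW : ‖W‖ ≤ Wm) (hΔt : 0 < Δt) :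
    ∀ n : ℕ, (n : ℝ) * Δt ≤ T →
      ‖G ^ n‖ ≤ C + C * (Real.exp (Wm * C * T * Δt ^ 2) - 1) ∧
      ‖U ^ n - G ^ n‖ ≤ C * (Real.exp (Wm * C * T * Δt ^ 2) - 1) := by
  have hC0 : 0 ≤ C := le_trans (norm_nonneg _) (hU 0)
  have hWm0 : 0 ≤ Wm := le_trans (norm_nonneg _) hW
  set ε : ℝ := Δt ^ 3 * Wm * C with hε
  have hε0 : 0 ≤ ε := by positivity
  -- norm of U - G
  have hnormUG : ‖U - G‖ ≤ Δt ^ 3 * Wm := by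
    rw [hUG, norm_smul, Real.norm_of_nonneg (by positivity)]
    exact mul_le_mul_of_nonneg_left hW (by positivity)
  -- key bound on the difference, given bounds on G powers below n
  have hDiff : ∀ n : ℕ, (∀ k < n, ‖G ^ k‖ ≤ C * (1 + ε) ^ k) →
      ‖U ^ n - G ^ n‖ ≤ C * ((1 + ε) ^ n - 1) := by
    intro n hG
    rw [pow_sub_pow_telescope]
    calc ‖∑ k ∈ Finset.range n, U ^ (n - 1 - k) * (U - G) * G ^ k‖
        ≤ ∑ k ∈ Finset.range n, ‖U ^ (n - 1 - k) * (U - G) * G ^ k‖ :=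
          norm_sum_le _ _
      _ ≤ ∑ k ∈ Finset.range n, C * (Δt ^ 3 * Wm) * (C * (1 + ε) ^ k) := by
          apply Finset.sum_le_sum
          intro k hk
          rw [Finset.mem_range] at hk
          calc ‖U ^ (n - 1 - k) * (U - G) * G ^ k‖
              ≤ ‖U ^ (n - 1 - k) * (U - G)‖ * ‖G ^ k‖ := norm_mul_le _ _
            _ ≤ ‖U ^ (n - 1 - k)‖ * ‖U - G‖ * ‖G ^ k‖ :=
                mul_le_mul_of_nonneg_right (norm_mul_le _ _) (norm_nonneg _)
            _ ≤ C * (Δt ^ 3 * Wm) * (C * (1 + ε) ^ k) := by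
                apply mul_le_mul
                · exact mul_le_mul (hU _) hnormUG (norm_nonneg _) hC0
                · exact hG k hk
                · exact norm_nonneg _
                · positivity
      _ = C * ((1 + ε) ^ n - 1) := by
          rw [← Finset.mul_sum, ← Finset.mul_sum]
          have h := geom_sum_mul (1 + ε) n
          simp only [add_sub_cancel_left] at h
          calc C * (Δt ^ 3 * Wm) * (C * ∑ k ∈ Finset.range n, (1 + ε) ^ k)
              = C * ((∑ k ∈ Finset.range n, (1 + ε) ^ k) * ε) := by rw [hε]; ring
            _ = C * ((1 + ε) ^ n - 1) := by rw [h]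
  -- Gronwall: bound on G powers
  have hGB : ∀ n : ℕ, ‖G ^ n‖ ≤ C * (1 + ε) ^ n := by
    intro n
    induction n using Nat.strong_induction_on with
    | _ n ih =>
      have h1 : ‖G ^ n‖ ≤ ‖U ^ n‖ + ‖U ^ n - G ^ n‖ := by
        calc ‖G ^ n‖ = ‖U ^ n - (U ^ n - G ^ n)‖ := by rw [sub_sub_cancel]
          _ ≤ ‖U ^ n‖ + ‖U ^ n - G ^ n‖ := norm_sub_le _ _
      have h2 := hDiff n ih
      calc ‖G ^ n‖ ≤ C + C * ((1 + ε) ^ n - 1) := by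
            have := hU n; linarith
        _ = C * (1 + ε) ^ n := by ring
  -- conclude
  intro n hnT
  have hT0 : (0:ℝ) ≤ T := le_trans (by positivity) hnT
  have hexp : (1 + ε) ^ n ≤ Real.exp (Wm * C * T * Δt ^ 2) := by
    calc (1 + ε) ^ n = (ε + 1) ^ n := by rw [add_comm]
      _ ≤ (Real.exp ε) ^ n :=
          pow_le_pow_left₀ (by linarith) (Real.add_one_le_exp ε) n
      _ = Real.exp (n * ε) := by rw [← Real.exp_nat_mul]
      _ ≤ Real.exp (Wm * C * T * Δt ^ 2) := by
          apply Real.exp_le_exp.mpr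
          have : (n : ℝ) * ε = ((n : ℝ) * Δt) * (Δt ^ 2 * Wm * C) := by rw [hε]; ring
          rw [this]
          calc ((n : ℝ) * Δt) * (Δt ^ 2 * Wm * C) ≤ T * (Δt ^ 2 * Wm * C) :=
                mul_le_mul_of_nonneg_right hnT (by positivity)
            _ = Wm * C * T * Δt ^ 2 := by ring
  have hD : ‖U ^ n - G ^ n‖ ≤ C * (Real.exp (Wm * C * T * Δt ^ 2) - 1) := by
    calc ‖U ^ n - G ^ n‖ ≤ C * ((1 + ε) ^ n - 1) := hDiff n (fun k _ => hGB k)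
      _ ≤ C * (Real.exp (Wm * C * T * Δt ^ 2) - 1) := by
          apply mul_le_mul_of_nonneg_left _ hC0
          linarith
  refine ⟨?_, hD⟩
  calc ‖G ^ n‖ = ‖U ^ n - (U ^ n - G ^ n)‖ := by rw [sub_sub_cancel]
    _ ≤ ‖U ^ n‖ + ‖U ^ n - G ^ n‖ := norm_sub_le _ _
    _ ≤ C + C * (Real.exp (Wm * C * T * Δt ^ 2) - 1) := add_le_add (hU n) hD
end

section
/- Let (α_n)_{n≥1} be a sequence of nonnegative reals satisfying α₁ ≤ a and α_n ≤ (n−1)a + b(α_{n−1} + α_{n−2} + ⋯ + α₁) for n > 1, where a, b ≥ 0. Then α_n ≤ (n−1)a + a b { Σ_{k=0}^{n−2} (n−2−k)(1+b)^k + (1+b)^{n−2} } ≤ (n−1)a + a b (1+b)^{n−2} (n−1 + (n−2)(n−1)/2 + 1) for n ≥ 2. -/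
private lemma gauss_aux (m : ℕ) : ∑ k ∈ Finset.range (m+1), (k:ℝ) = m*(m+1)/2 := by
  induction m with
  | zero => simp
  | succ m ih => rw [Finset.sum_range_succ, ih]; push_cast; ring

/-- recursion inequality of Proposition 8.3. -/
theorem stmt11 (a b : ℝ) (ha : 0 ≤ a) (hb : 0 ≤ b) (α : ℕ → ℝ)
    (hnonneg : ∀ n : ℕ, 1 ≤ n → 0 ≤ α n)
    (h1 : α 1 ≤ a)
    (hrec : ∀ n : ℕ, 1 < n →
      α n ≤ ((n : ℝ) - 1) * a + b * ∑ k ∈ Finset.Icc 1 (n - 1), α k) :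
    ∀ n : ℕ, 2 ≤ n →
      α n ≤ ((n : ℝ) - 1) * a +
          a * b * ((∑ k ∈ Finset.range (n - 1), ((n : ℝ) - 2 - k) * (1 + b) ^ k) +
            (1 + b) ^ (n - 2)) ∧
      ((n : ℝ) - 1) * a +
          a * b * ((∑ k ∈ Finset.range (n - 1), ((n : ℝ) - 2 - k) * (1 + b) ^ k) +
            (1 + b) ^ (n - 2)) ≤
        ((n : ℝ) - 1) * a +
          a * b * (1 + b) ^ (n - 2) *
            (((n : ℝ) - 1) + ((n : ℝ) - 2) * ((n : ℝ) - 1) / 2 + 1) := by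
  have hb1 : (1:ℝ) ≤ 1 + b := by linarith
  have hbp : (0:ℝ) ≤ 1 + b := by linarith
  -- key sum bound
  have aux : ∀ m : ℕ, ∑ k ∈ Finset.Icc 1 (m+1), α k ≤
      a * ((∑ k ∈ Finset.range (m+1), ((m:ℝ) - k) * (1 + b) ^ k) + (1 + b) ^ m) := by
    intro m
    induction m with
    | zero => simpa using h1
    | succ m ih =>
      have hsplit : ∑ k ∈ Finset.Icc 1 (m+2), α k
          = ∑ k ∈ Finset.Icc 1 (m+1), α k + α (m+2) := by
        rw [← Finset.sum_Icc_succ_top (by omega : 1 ≤ m+2)]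
      have hα := hrec (m+2) (by omega)
      push_cast at hα
      have hgs : ∑ k ∈ Finset.range (m+1+1), (((m+1:ℕ):ℝ) - k) * (1 + b) ^ k
          = ∑ k ∈ Finset.range (m+2), (((m:ℝ)+1) - k) * (1 + b) ^ k :=
        Finset.sum_congr rfl (fun k _ => by push_cast; ring)
      have hsum_eq : ∑ k ∈ Finset.range (m+2), (((m:ℝ)+1) - k) * (1 + b) ^ k
          = (1 + b) * (∑ k ∈ Finset.range (m+1), ((m:ℝ) - k) * (1 + b) ^ k) + ((m:ℝ)+1) := by
        rw [Finset.sum_range_succ' (fun k => (((m:ℝ)+1) - k) * (1 + b) ^ k), Finset.mul_sum]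
        push_cast
        congr 1
        · exact Finset.sum_congr rfl (fun k _ => by push_cast; ring)
        · norm_num
      have hmul : (1 + b) * (∑ k ∈ Finset.Icc 1 (m+1), α k)
          ≤ (1 + b) * (a * ((∑ k ∈ Finset.range (m+1), ((m:ℝ) - k) * (1 + b) ^ k) + (1 + b) ^ m)) :=
        mul_le_mul_of_nonneg_left ih hbp
      rw [hgs, hsum_eq, hsplit, pow_succ]
      nlinarith [hmul, hα]
  intro n hn
  obtain ⟨m, rfl⟩ : ∃ m, n = m + 2 := ⟨n - 2, by omega⟩
  have hfix : ∑ k ∈ Finset.range (m+2-1), (((m+2:ℕ):ℝ) - 2 - k) * (1 + b) ^ k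
      = ∑ k ∈ Finset.range (m+1), ((m:ℝ) - k) * (1 + b) ^ k :=
    Finset.sum_congr (by norm_num) (fun k _ => by push_cast; ring)
  constructor
  · have hα := hrec (m+2) (by omega)
    have hS := aux m
    have hb' := mul_le_mul_of_nonneg_left hS hb
    rw [hfix]
    push_cast at hα ⊢
    nlinarith [hb']
  · rw [hfix]
    have hterm : ∀ k ∈ Finset.range (m+1),
        ((m:ℝ) - k) * (1 + b) ^ k ≤ ((m:ℝ) - k) * (1 + b) ^ m := by
      intro k hk
      have hk' : k ≤ m := Nat.lt_succ_iff.mp (Finset.mem_range.mp hk)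
      have h0 : (0:ℝ) ≤ (m:ℝ) - k := by
        have : (k:ℝ) ≤ m := by exact_mod_cast hk'
        linarith
      exact mul_le_mul_of_nonneg_left (pow_le_pow_right₀ hb1 hk') h0
    have hsum_le : ∑ k ∈ Finset.range (m+1), ((m:ℝ) - k) * (1 + b) ^ k
        ≤ (m:ℝ) * ((m:ℝ)+1) / 2 * (1 + b) ^ m := by
      calc ∑ k ∈ Finset.range (m+1), ((m:ℝ) - k) * (1 + b) ^ k
          ≤ ∑ k ∈ Finset.range (m+1), ((m:ℝ) - k) * (1 + b) ^ m :=
            Finset.sum_le_sum hterm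
        _ = (∑ k ∈ Finset.range (m+1), ((m:ℝ) - k)) * (1 + b) ^ m := by
            rw [Finset.sum_mul]
        _ = (m:ℝ) * ((m:ℝ)+1) / 2 * (1 + b) ^ m := by
            congr 1
            rw [Finset.sum_sub_distrib, gauss_aux]
            simp [Finset.sum_const, Finset.card_range]
            push_cast
            ring
    have hab : 0 ≤ a * b := mul_nonneg ha hb
    have hpow : (0:ℝ) ≤ (1 + b) ^ m := pow_nonneg hbp m
    have key : (∑ k ∈ Finset.range (m+1), ((m:ℝ) - k) * (1 + b) ^ k) + (1 + b) ^ m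
        ≤ (1 + b) ^ m * ((((m+2:ℕ):ℝ) - 1) + (((m+2:ℕ):ℝ) - 2) * (((m+2:ℕ):ℝ) - 1) / 2 + 1) := by
      push_cast
      nlinarith [hsum_le, hpow, Nat.cast_nonneg (α := ℝ) m]
    have hfin := mul_le_mul_of_nonneg_left key hab
    have h2 : (m+2) - 2 = m := by omega
    rw [h2]
    push_cast at hfin ⊢
    nlinarith [hfin]
end

section
/- Let G and G_V be matrices with ‖Gⁿ‖ ≤ e^{K n Δt³} and ‖G_Vⁿ‖ ≤ 1 for all n ≥ 0, and ‖G − G_V‖ ≤ K Δt³, for constants K, Δt > 0. Then for all n with nΔt ≤ T: ‖Gⁿ − G_Vⁿ‖ ≤ K T Δt² e^{K T Δt²}. -/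
/-- deviation of the modified leapfrog evolution from the stable reference:
if ‖Gⁿ‖ ≤ e^{KnΔt³}, ‖G_Vⁿ‖ ≤ 1 and ‖G − G_V‖ ≤ KΔt³, then for nΔt ≤ T,
‖Gⁿ − G_Vⁿ‖ ≤ KTΔt² e^{KTΔt²}. -/
theorem stmt15 {R : Type*} [NormedRing R] (G GV : R) (K Δt T : ℝ)
    (hK : 0 < K) (hΔt : 0 < Δt)
    (hG : ∀ n : ℕ, ‖G ^ n‖ ≤ Real.exp (K * n * Δt ^ 3))
    (hGV : ∀ n : ℕ, ‖GV ^ n‖ ≤ 1)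
    (hdiff : ‖G - GV‖ ≤ K * Δt ^ 3) :
    ∀ n : ℕ, (n : ℝ) * Δt ≤ T →
      ‖G ^ n - GV ^ n‖ ≤ K * T * Δt ^ 2 * Real.exp (K * T * Δt ^ 2) := by
  have key : ∀ n : ℕ, ‖G ^ n - GV ^ n‖ ≤
      (n : ℝ) * (K * Δt ^ 3) * Real.exp (K * n * Δt ^ 3) := by
    intro n
    induction n with
    | zero => simp
    | succ n ih =>
      have hGV1 : ‖GV‖ ≤ 1 := by simpa using hGV 1
      have hid : G ^ (n + 1) - GV ^ (n + 1)
          = G ^ n * (G - GV) + (G ^ n - GV ^ n) * GV := by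
        rw [pow_succ, pow_succ]; noncomm_ring
      have h1 : ‖G ^ n * (G - GV)‖ ≤ Real.exp (K * n * Δt ^ 3) * (K * Δt ^ 3) := by
        calc ‖G ^ n * (G - GV)‖ ≤ ‖G ^ n‖ * ‖G - GV‖ := norm_mul_le _ _
          _ ≤ Real.exp (K * n * Δt ^ 3) * (K * Δt ^ 3) := by
              apply mul_le_mul (hG n) hdiff (norm_nonneg _) (Real.exp_pos _).le
      have h2 : ‖(G ^ n - GV ^ n) * GV‖ ≤ (n : ℝ) * (K * Δt ^ 3) * Real.exp (K * n * Δt ^ 3) := by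
        calc ‖(G ^ n - GV ^ n) * GV‖ ≤ ‖G ^ n - GV ^ n‖ * ‖GV‖ := norm_mul_le _ _
          _ ≤ ((n : ℝ) * (K * Δt ^ 3) * Real.exp (K * n * Δt ^ 3)) * 1 := by
              apply mul_le_mul ih hGV1 (norm_nonneg _)
              positivity
          _ = (n : ℝ) * (K * Δt ^ 3) * Real.exp (K * n * Δt ^ 3) := by ring
      have hexp : Real.exp (K * n * Δt ^ 3) ≤ Real.exp (K * (n + 1) * Δt ^ 3) := by
        apply Real.exp_le_exp.2
        have : (n : ℝ) ≤ (n : ℝ) + 1 := by linarith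
        nlinarith [sq_nonneg Δt, pow_pos hΔt 3]
      calc ‖G ^ (n + 1) - GV ^ (n + 1)‖
          ≤ ‖G ^ n * (G - GV)‖ + ‖(G ^ n - GV ^ n) * GV‖ := by
            rw [hid]; exact norm_add_le _ _
        _ ≤ Real.exp (K * n * Δt ^ 3) * (K * Δt ^ 3)
              + (n : ℝ) * (K * Δt ^ 3) * Real.exp (K * n * Δt ^ 3) := add_le_add h1 h2
        _ = ((n : ℝ) + 1) * (K * Δt ^ 3) * Real.exp (K * n * Δt ^ 3) := by ring
        _ ≤ ((n : ℝ) + 1) * (K * Δt ^ 3) * Real.exp (K * (n + 1) * Δt ^ 3) := by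
            apply mul_le_mul_of_nonneg_left hexp
            positivity
        _ = ((n + 1 : ℕ) : ℝ) * (K * Δt ^ 3) * Real.exp (K * (n + 1 : ℕ) * Δt ^ 3) := by
            push_cast; ring
  intro n hn
  have h0 : (0 : ℝ) ≤ (n : ℝ) * Δt := by positivity
  have hT : (0 : ℝ) ≤ T := le_trans h0 hn
  have hbase : K * ((n : ℝ) * Δt) * Δt ^ 2 ≤ K * T * Δt ^ 2 :=
    mul_le_mul_of_nonneg_right (mul_le_mul_of_nonneg_left hn hK.le) (sq_nonneg Δt)
  have harg : K * n * Δt ^ 3 ≤ K * T * Δt ^ 2 := by nlinarith [hbase]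
  have hcoef : (n : ℝ) * (K * Δt ^ 3) ≤ K * T * Δt ^ 2 := by nlinarith [hbase]
  calc ‖G ^ n - GV ^ n‖ ≤ (n : ℝ) * (K * Δt ^ 3) * Real.exp (K * n * Δt ^ 3) := key n
    _ ≤ K * T * Δt ^ 2 * Real.exp (K * T * Δt ^ 2) := by
        apply mul_le_mul hcoef (Real.exp_le_exp.2 harg) (Real.exp_pos _).le
        positivity
end

section
/- Let V₁, V₂ be matrices whose Hermitian parts are negative semidefinite (V_i* + V_i ≤ 0). Then for all Δt ≥ 0, the symmetric product L^s = exp(Δt V₁/2) exp(Δt V₂) exp(Δt V₁/2) satisfies ‖L^s‖ ≤ 1, and ‖exp(Δt(V₁+V₂)) − L^s‖ = O(Δt³) as Δt → 0. -/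
/-!
Transport everything to operators on Euclidean space through `Matrix.toEuclideanCLM`, which
commutes with `exp`. If `A† + A ≤ 0`, then `s ↦ ‖exp (s • A) x‖²` has derivative
`2 re ⟪A u, u⟫ ≤ 0`, so every factor of the Strang product is a contraction. The splitting error
`exp (t • (B + C)) - exp ((t / 2) • B) * exp (t • C) * exp ((t / 2) • B)` is analytic in `t` and,
by the Leibniz rule, its derivatives of order `0, 1, 2` vanish at `t = 0`; an analytic function
with this property is `O(t³)`.
-/

open Asymptotics NormedSpace
open scoped ComplexOrder InnerProductSpace Topology

theorem AnalyticAt.isBigO_pow_of_iteratedDeriv_eq_zero {𝕜 E : Type*} [NontriviallyNormedField 𝕜]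
    [CharZero 𝕜] [NormedAddCommGroup E] [NormedSpace 𝕜 E] [CompleteSpace E] {f : 𝕜 → E}
    (hf : AnalyticAt 𝕜 f 0) {N : ℕ} (h : ∀ i < N, iteratedDeriv i f 0 = 0) :
    f =O[𝓝 0] (· ^ N) := by
  obtain ⟨g, hg, hfg⟩ := (natCast_le_analyticOrderAt hf).mp
    ((natCast_le_analyticOrderAt_iff_iteratedDeriv_eq_zero hf).mpr h)
  have hg1 : g =O[𝓝 0] (fun _ => (1 : 𝕜)) := hg.continuousAt.isBigO_one 𝕜
  refine IsBigO.congr' ?_ (hfg.mono fun z hz => (sub_zero z ▸ hz).symm) (.refl _ _)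
  simpa using (isBigO_refl (· ^ N) (𝓝 (0 : 𝕜))).smul hg1

section StrangSplitting

variable {𝕂 𝔸 : Type*} [RCLike 𝕂] [NormedRing 𝔸] [NormedAlgebra 𝕂 𝔸] [CompleteSpace 𝔸]

theorem analyticAt_exp_smul (X : 𝔸) (t : 𝕂) : AnalyticAt 𝕂 (fun s : 𝕂 => exp (s • X)) t :=
  (analyticAt_exp_of_mem_ball (t • X) <| (expSeries_radius_eq_top 𝕂 𝔸).symm ▸ edist_lt_top _ _).comp
    (f := fun s : 𝕂 => s • X) (analyticAt_id.smul analyticAt_const)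

theorem iteratedDeriv_exp_smul (X : 𝔸) (k : ℕ) :
    iteratedDeriv k (fun t : 𝕂 => exp (t • X)) = fun t => X ^ k * exp (t • X) := by
  induction k with
  | zero => simp
  | succ k ih =>
    rw [iteratedDeriv_succ, ih]
    funext t
    rw [((hasDerivAt_exp_smul_const' X t).const_mul (X ^ k)).deriv, pow_succ, mul_assoc]

theorem iteratedDeriv_exp_smul_zero (X : 𝔸) (k : ℕ) :
    iteratedDeriv k (fun t : 𝕂 => exp (t • X)) 0 = X ^ k := by
  simp [iteratedDeriv_exp_smul]

theorem iteratedDeriv_exp_add_sub_strang_eq_zero (B C : 𝔸) {k : ℕ} (hk : k < 3) :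
    iteratedDeriv k (fun t : 𝕂 => exp (t • (B + C)) -
      exp (t • (2⁻¹ : 𝕂) • B) * exp (t • C) * exp (t • (2⁻¹ : 𝕂) • B)) 0 = 0 := by
  have hcd : ∀ (i : ℕ) (X : 𝔸), ContDiffAt 𝕂 i (fun t : 𝕂 => exp (t • X)) 0 := fun _ X =>
    (analyticAt_exp_smul X 0).contDiffAt
  rw [iteratedDeriv_fun_sub (hcd _ _) (((hcd _ _).mul (hcd _ _)).mul (hcd _ _)),
    iteratedDeriv_fun_mul ((hcd _ _).mul (hcd _ _)) (hcd _ _)]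
  interval_cases k <;>
    simp only [Finset.sum_range_succ, Finset.sum_range_zero,
      iteratedDeriv_fun_mul (hcd _ _) (hcd _ _), iteratedDeriv_exp_smul_zero] <;>
    simp only [Nat.choose_zero_right, Nat.choose_self, Nat.choose_succ_self_right, Nat.reduceAdd,
      Nat.add_one_sub_one, tsub_self, tsub_zero, Nat.cast_one, Nat.cast_ofNat, pow_zero, pow_one, sq,
      zero_add, mul_one, one_mul, two_mul, mul_add, add_mul, smul_add, smul_smul, sub_self,
      Algebra.mul_smul_comm, Algebra.smul_mul_assoc] <;>
    module

theorem exp_add_sub_strang_isBigO (B C : 𝔸) :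
    (fun t : 𝕂 => exp (t • (B + C)) - exp ((t / 2) • B) * exp (t • C) * exp ((t / 2) • B))
      =O[𝓝 0] (· ^ 3) := by
  simp_rw [div_eq_mul_inv, ← smul_smul]
  refine AnalyticAt.isBigO_pow_of_iteratedDeriv_eq_zero ?_
    fun _ hk => iteratedDeriv_exp_add_sub_strang_eq_zero B C hk
  exact (analyticAt_exp_smul _ 0).sub
    (((analyticAt_exp_smul _ 0).mul (analyticAt_exp_smul _ 0)).mul (analyticAt_exp_smul _ 0))

end StrangSplitting

namespace ContinuousLinearMap

theorem re_inner_apply_self_nonpos {𝕜 E : Type*} [RCLike 𝕜] [NormedAddCommGroup E]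
    [InnerProductSpace 𝕜 E] [CompleteSpace E] {A : E →L[𝕜] E} (hA : star A + A ≤ 0) (x : E) :
    RCLike.re ⟪A x, x⟫_𝕜 ≤ 0 := by
  have hpos := ((le_def _ _).mp hA).re_inner_nonneg_left x
  have hstar : RCLike.re ⟪star A x, x⟫_𝕜 = RCLike.re ⟪A x, x⟫_𝕜 := by
    rw [star_eq_adjoint, adjoint_inner_left, inner_re_symm]
  simp only [zero_sub, neg_apply, add_apply, inner_neg_left, inner_add_left, map_neg, map_add,
    hstar] at hpos
  linarith

theorem norm_exp_smul_le_one {E : Type*} [NormedAddCommGroup E] [InnerProductSpace ℂ E]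
    [CompleteSpace E] {A : E →L[ℂ] E} (hA : star A + A ≤ 0) {t : ℝ} (ht : 0 ≤ t) :
    ‖exp (t • A)‖ ≤ 1 := by
  refine opNorm_le_bound _ zero_le_one fun x => ?_
  set u : ℝ → E := fun s => exp (s • A) x
  have hu : ∀ s, HasDerivAt u (A (u s)) s := fun s =>
    ((apply ℂ E x).restrictScalars ℝ).hasFDerivAt.comp_hasDerivAt s
      (hasDerivAt_exp_smul_const' A s)
  have hφ : ∀ s, HasDerivAt (fun s => RCLike.re ⟪u s, u s⟫_ℂ)
      (RCLike.re (⟪u s, A (u s)⟫_ℂ + ⟪A (u s), u s⟫_ℂ)) s := fun s =>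
    (RCLike.reCLM (K := ℂ)).hasFDerivAt.comp_hasDerivAt s ((hu s).inner ℂ (hu s))
  have hanti : Antitone fun s => RCLike.re ⟪u s, u s⟫_ℂ := by
    refine antitone_of_deriv_nonpos (fun s => (hφ s).differentiableAt) fun s => ?_
    rw [(hφ s).deriv, map_add, inner_re_symm]
    linarith [re_inner_apply_self_nonpos hA (u s)]
  have hsq := hanti ht
  simp only [u, zero_smul, exp_zero, inner_self_eq_norm_sq] at hsq
  rw [one_mul]
  exact (pow_le_pow_iff_left₀ (norm_nonneg _) (norm_nonneg _) two_ne_zero).mp hsq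

end ContinuousLinearMap

namespace Matrix

variable {n 𝕜 : Type*} [Fintype n] [DecidableEq n] [RCLike 𝕜]

theorem continuous_toEuclideanCLM : Continuous (toEuclideanCLM (𝕜 := 𝕜) (n := n)) :=
  (toEuclideanCLM (𝕜 := 𝕜) (n := n)).toAlgEquiv.toLinearEquiv.toLinearMap
    |>.continuous_of_finiteDimensional

theorem toEuclideanCLM_exp_s16 (A : Matrix n n 𝕜) :
    toEuclideanCLM (𝕜 := 𝕜) (exp A) = exp (toEuclideanCLM (𝕜 := 𝕜) A) :=
  open scoped Norms.Operator in
  map_exp_of_mem_ball (𝕂 := 𝕜) _ continuous_toEuclideanCLM A <|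
    (expSeries_radius_eq_top 𝕜 (Matrix n n 𝕜)).symm ▸ edist_lt_top _ _

theorem toEuclideanCLM_real_smul (t : ℝ) (A : Matrix n n 𝕜) :
    toEuclideanCLM (𝕜 := 𝕜) (t • A) = t • toEuclideanCLM (𝕜 := 𝕜) A :=
  (toEuclideanCLM (𝕜 := 𝕜) (n := n)).toAlgEquiv.toAlgHom.map_smul_of_tower t A

theorem PosSemidef.isPositive_toEuclideanCLM {A : Matrix n n 𝕜} (hA : A.PosSemidef) :
    (toEuclideanCLM (𝕜 := 𝕜) A).IsPositive := by
  rw [← ContinuousLinearMap.isPositive_toLinearMap_iff, coe_toEuclideanCLM_eq_toEuclideanLin]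
  exact isPositive_toEuclideanLin_iff.mpr hA

theorem star_toEuclideanCLM_add_self_nonpos {V : Matrix n n 𝕜} (hV : (-(Vᴴ + V)).PosSemidef) :
    star (toEuclideanCLM (𝕜 := 𝕜) V) + toEuclideanCLM (𝕜 := 𝕜) V ≤ 0 := by
  rw [ContinuousLinearMap.le_def, zero_sub, ← map_star, ← map_add, ← map_neg]
  exact hV.isPositive_toEuclideanCLM

theorem norm_toEuclideanCLM_exp_smul_le_one {V : Matrix n n ℂ} (hV : (-(Vᴴ + V)).PosSemidef)
    {t : ℝ} (ht : 0 ≤ t) : ‖toEuclideanCLM (𝕜 := ℂ) (exp (t • V))‖ ≤ 1 := by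
  rw [toEuclideanCLM_exp_s16, toEuclideanCLM_real_smul]
  exact ContinuousLinearMap.norm_exp_smul_le_one (star_toEuclideanCLM_add_self_nonpos hV) ht

end Matrix

open Matrix in
/-- the Strang-split product L^s = exp(ΔtV₁/2)exp(ΔtV₂)exp(ΔtV₁/2) of two
matrices with negative semidefinite Hermitian parts has Euclidean operator norm ≤ 1 for
Δt ≥ 0, and differs from exp(Δt(V₁+V₂)) by O(Δt³) as Δt → 0. -/
theorem stmt16 {n : ℕ} (V1 V2 : Matrix (Fin n) (Fin n) ℂ)
    (h1 : (-(V1ᴴ + V1)).PosSemidef) (h2 : (-(V2ᴴ + V2)).PosSemidef) :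
    (∀ Δt : ℝ, 0 ≤ Δt →
      ‖Matrix.toEuclideanCLM (𝕜 := ℂ)
        (NormedSpace.exp ((Δt / 2) • V1) * NormedSpace.exp (Δt • V2) *
          NormedSpace.exp ((Δt / 2) • V1))‖ ≤ 1) ∧
    (fun Δt : ℝ =>
        Matrix.toEuclideanCLM (𝕜 := ℂ)
          (NormedSpace.exp (Δt • (V1 + V2)) -
            NormedSpace.exp ((Δt / 2) • V1) * NormedSpace.exp (Δt • V2) *
              NormedSpace.exp ((Δt / 2) • V1)))
      =O[nhds 0] (fun Δt : ℝ => Δt ^ 3) := by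
  refine ⟨fun Δt hΔt => ?_, ?_⟩
  · have hV1 := norm_toEuclideanCLM_exp_smul_le_one h1 (div_nonneg hΔt zero_le_two)
    have hV2 := norm_toEuclideanCLM_exp_smul_le_one h2 hΔt
    rw [map_mul, map_mul]
    calc _ ≤ _ := norm_mul₃_le
      _ ≤ 1 * 1 * 1 := by gcongr
      _ = 1 := by norm_num
  · simp only [map_sub, map_mul, toEuclideanCLM_exp_s16, toEuclideanCLM_real_smul, map_add]
    exact exp_add_sub_strang_isBigO _ _
end
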